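/- The graph 5K₂ + K₄ (the join of the disjoint union of five copies of K₂ with K₄) is 4-connected with κ = 4 and δ = 5, has a cycle of length exactly 4δ − 2κ = 12 but no cycle of length 4δ − 2κ + 1 = 13, and has no dominating cycle. -/

import Mathlib

open SimpleGraph

/-- `S` is a cut-set: removing `S` leaves a disconnected or trivial graph. -/
def IsCutSet {V : Type*} (G : SimpleGraph V) (S : Set V) : Prop :=
  ¬ (G.induce Sᶜ).Connected ∨ Sᶜ.Subsingleton

/-- The connectivity `κ` of `G`. -/
noncomputable def kappa {V : Type*} (G : SimpleGraph V) : ℕ :=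
  sInf {k | ∃ S : Set V, S.ncard = k ∧ IsCutSet G S}

/-- The graph `5K₂ + K₄`: five disjoint edges (vertices `Sum.inl i`, paired by `i / 2`)
joined completely to a `K₄` (vertices `Sum.inr j`). -/
def G19 : SimpleGraph (Fin 10 ⊕ Fin 4) :=
  SimpleGraph.fromRel (fun a b =>
    match a, b with
    | Sum.inl i, Sum.inl j => i.val / 2 = j.val / 2
    | _, _ => True)

noncomputable instance : DecidableRel G19.Adj := Classical.decRel _

/-!
A cycle in `5K₂ + K₄` meets `5K₂` in runs of at most two consecutive vertices, since a third
vertex would have to close up a `K₂`; each run lies in a single `K₂` and is followed by one of the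
at most four `K₄` vertices of the cycle. Hence the cycle has at most `4 + 2 * 4 = 12` vertices, and
it meets at most four of the five `K₂`s: the fifth is an edge off the cycle, so no cycle dominates.
Deleting the `K₄` leaves the disconnected `5K₂`, while deleting fewer than four vertices leaves
a `K₄` vertex adjacent to all others.
-/

open Finset

namespace SimpleGraph.Walk

variable {V : Type*} {G : SimpleGraph V} {x : V}

theorem getVert_mod_length (C : G.Walk x x) {k : ℕ} (hk : k ≤ C.length) :
    C.getVert (k % C.length) = C.getVert k := by
  rcases hk.lt_or_eq with hk | rfl
  · rw [Nat.mod_eq_of_lt hk]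
  · rw [Nat.mod_self, getVert_zero, getVert_length]

theorem IsCycle.exists_injective_zmod {C : G.Walk x x} (hC : C.IsCycle) :
    ∃ v : ZMod C.length → V, Function.Injective v ∧ (∀ i, G.Adj (v i) (v (i + 1))) ∧
      ∀ a ∈ C.support, a ∈ Set.range v := by
  have : NeZero C.length := ⟨by have := hC.three_le_length; omega⟩
  refine ⟨fun i => C.getVert i.val, fun i j h => ?_, fun i => ?_, fun a ha => ?_⟩
  · have hmem (i : ZMod C.length) : i.val ∈ {k | k ≤ C.length - 1} := by
      have := ZMod.val_lt i
      simp only [Set.mem_ofPred_eq]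
      omega
    exact ZMod.val_injective _ (hC.getVert_injOn' (hmem i) (hmem j) h)
  · have hi := ZMod.val_lt i
    have hsucc : i + 1 = ((i.val + 1 : ℕ) : ZMod C.length) := by simp
    simp only [hsucc, ZMod.val_natCast, C.getVert_mod_length (k := i.val + 1) (by omega)]
    exact C.adj_getVert_succ hi
  · obtain ⟨k, rfl, hk⟩ := mem_support_iff_exists_getVert.mp ha
    exact ⟨k, by simp only [ZMod.val_natCast, C.getVert_mod_length hk]⟩

end SimpleGraph.Walk

theorem SimpleGraph.connected_induce_of_forall_adj {V : Type*} {G : SimpleGraph V} {s : Set V}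
    {w : V} (hw : w ∈ s) (hadj : ∀ u ∈ s, u ≠ w → G.Adj u w) : (G.induce s).Connected := by
  have hreach : ∀ u : s, (G.induce s).Reachable u ⟨w, hw⟩ := fun u => by
    by_cases h : u = ⟨w, hw⟩
    · rw [h]
    · exact Adj.reachable (hadj u u.2 fun h' => h (Subtype.ext h'))
  exact (connected_iff _).mpr ⟨fun u v => (hreach u).trans (hreach v).symm, ⟨⟨w, hw⟩⟩⟩

namespace G19

def block : Fin 10 ⊕ Fin 4 → Fin 5 ⊕ Fin 4 := Sum.map (fun a => ⟨a.val / 2, by omega⟩) id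

theorem adj_iff (u w : Fin 10 ⊕ Fin 4) :
    G19.Adj u w ↔ u ≠ w ∧ (u.isRight ∨ w.isRight ∨ block u = block w) := by
  cases u <;> cases w <;> simp [G19, block, Fin.ext_iff, eq_comm]

theorem adj_inl_inl {a b : Fin 10} :
    G19.Adj (.inl a) (.inl b) ↔ a ≠ b ∧ a.val / 2 = b.val / 2 := by
  simp [adj_iff, block, Fin.ext_iff]

theorem adj_inr {u : Fin 10 ⊕ Fin 4} {j : Fin 4} (h : u ≠ .inr j) : G19.Adj u (.inr j) := by
  simp [adj_iff, h]

theorem eq_of_adj_inl_inl {a b c : Fin 10} (hab : G19.Adj (.inl a) (.inl b))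
    (hbc : G19.Adj (.inl b) (.inl c)) : c = a := by
  rw [adj_inl_inl, Ne, Fin.ext_iff] at hab hbc
  exact Fin.ext (by omega)

theorem block_eq_of_adj_inl_inl {a b : Fin 10} (h : G19.Adj (.inl a) (.inl b)) :
    block (.inl a) = block (.inl b) := by
  simp [block, (adj_inl_inl.mp h).2]

theorem minDegree_eq : G19.minDegree = 5 := by
  -- the instance `Classical.decRel` does not compute, so `decide` runs with one read off `adj_iff`
  convert (by decide : @minDegree _ G19 _ (fun u w => decidable_of_iff _ (adj_iff u w).symm) = 5)

def cycle12 : G19.Walk (.inr 0) (.inr 0) :=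
  .cons (v := .inl 0) ((adj_iff _ _).2 (by decide)) <|
  .cons (v := .inl 1) ((adj_iff _ _).2 (by decide)) <|
  .cons (v := .inr 1) ((adj_iff _ _).2 (by decide)) <|
  .cons (v := .inl 2) ((adj_iff _ _).2 (by decide)) <|
  .cons (v := .inl 3) ((adj_iff _ _).2 (by decide)) <|
  .cons (v := .inr 2) ((adj_iff _ _).2 (by decide)) <|
  .cons (v := .inl 4) ((adj_iff _ _).2 (by decide)) <|
  .cons (v := .inl 5) ((adj_iff _ _).2 (by decide)) <|
  .cons (v := .inr 3) ((adj_iff _ _).2 (by decide)) <|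
  .cons (v := .inl 6) ((adj_iff _ _).2 (by decide)) <|
  .cons (v := .inl 7) ((adj_iff _ _).2 (by decide)) <|
  .cons (v := .inr 0) ((adj_iff _ _).2 (by decide)) .nil

theorem cycle12_isCycle : cycle12.IsCycle := by
  rw [cycle12, Walk.cons_isCycle_iff, Walk.isPath_def]
  exact ⟨by decide, by decide⟩

theorem cycle12_length : cycle12.length = 12 := rfl

theorem connected_induce_compl {S : Set (Fin 10 ⊕ Fin 4)} {j : Fin 4} (hj : .inr j ∉ S) :
    (G19.induce Sᶜ).Connected :=
  connected_induce_of_forall_adj hj fun _ _ h => adj_inr h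

theorem not_connected_induce_compl_range_inr : ¬ (G19.induce (Set.range .inr)ᶜ).Connected := by
  set T : Set (Fin 10 ⊕ Fin 4) := (Set.range .inr)ᶜ
  have hblock : ∀ u w : T, (G19.induce T).Reachable u w → block u = block w := by
    have hadj : ∀ u w : T, (G19.induce T).Adj u w → block u = block w := by
      rintro ⟨_ | _, hu⟩ ⟨_ | _, hw⟩ h
      · exact block_eq_of_adj_inl_inl h
      all_goals simp [T] at hu hw
    intro u w h
    simpa [Relation.reflTransGen_eq_self] using
      ((reachable_iff_reflTransGen u w).mp h).lift (p := Eq) _ hadj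
  intro h
  have := hblock ⟨.inl 0, by simp [T]⟩ ⟨.inl 2, by simp [T]⟩ (h.preconnected _ _)
  simp [block] at this

theorem kappa_eq : kappa G19 = 4 := by
  have hcut : IsCutSet G19 (Set.range .inr) := .inl not_connected_induce_compl_range_inr
  have hcard : (Set.range (Sum.inr : Fin 4 → Fin 10 ⊕ Fin 4)).ncard = 4 := by
    rw [Set.ncard_range_of_injective Sum.inr_injective, Nat.card_eq_fintype_card, Fintype.card_fin]
  refine le_antisymm (Nat.sInf_le ⟨_, hcard, hcut⟩) (le_csInf ⟨_, _, hcard, hcut⟩ ?_)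
  rintro _ ⟨S, rfl, hS⟩
  by_contra! hlt
  obtain ⟨j, hj⟩ : ∃ j : Fin 4, .inr j ∉ S := by
    by_contra! hall
    have := Set.ncard_le_ncard (Set.range_subset_iff.mpr hall)
    omega
  have hcompl : S.ncard + Sᶜ.ncard = 14 := by
    rw [Set.ncard_add_ncard_compl, Nat.card_eq_fintype_card]; rfl
  rcases hS with hdisc | hsub
  · exact hdisc (connected_induce_compl hj)
  · have := Set.ncard_le_one_iff_subsingleton.mpr hsub
    omega

section CyclicSequence

variable {n : ℕ} {v : ZMod n → Fin 10 ⊕ Fin 4}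

/-- For `v i ∈ 5K₂`, the first later position holding a `K₄` vertex. -/
def nextRight (v : ZMod n → Fin 10 ⊕ Fin 4) (i : ZMod n) : ZMod n :=
  if (v (i + 1)).isRight then i + 1 else i + 2

theorem eq_nextRight_sub (i : ZMod n) : i = nextRight v i - 1 ∨ i = nextRight v i - 2 := by
  unfold nextRight
  split_ifs <;> simp

theorem block_nextRight_sub_one (hadj : ∀ i, G19.Adj (v i) (v (i + 1))) {i : ZMod n}
    (hi : (v i).isLeft) : block (v (nextRight v i - 1)) = block (v i) := by
  unfold nextRight
  split_ifs with h
  · simp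
  · obtain ⟨a, ha⟩ := Sum.isLeft_iff.mp hi
    obtain ⟨b, hb⟩ := Sum.isLeft_iff.mp (Sum.not_isRight.mp h)
    have hab := hadj i
    rw [ha, hb] at hab
    rw [show i + 2 - 1 = i + 1 by ring, ha, hb, block_eq_of_adj_inl_inl hab]

theorem isRight_add_two (hn : 3 ≤ n) (hv : Function.Injective v)
    (hadj : ∀ i, G19.Adj (v i) (v (i + 1))) {i : ZMod n} (hi : (v i).isLeft)
    (hi1 : (v (i + 1)).isLeft) : (v (i + 2)).isRight := by
  by_contra hi2
  obtain ⟨a, ha⟩ := Sum.isLeft_iff.mp hi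
  obtain ⟨b, hb⟩ := Sum.isLeft_iff.mp hi1
  obtain ⟨c, hc⟩ := Sum.isLeft_iff.mp (Sum.not_isRight.mp hi2)
  have hab := hadj i
  have hbc := hadj (i + 1)
  rw [ha, hb] at hab
  rw [add_assoc, one_add_one_eq_two, hb, hc] at hbc
  have htwo : (2 : ZMod n) = 0 := by
    simpa using hv (show v (i + 2) = v i by rw [hc, ha, eq_of_adj_inl_inl hab hbc])
  have := Nat.le_of_dvd two_pos ((ZMod.natCast_eq_zero_iff 2 n).mp (by exact_mod_cast htwo))
  omega

theorem isRight_nextRight (hn : 3 ≤ n) (hv : Function.Injective v)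
    (hadj : ∀ i, G19.Adj (v i) (v (i + 1))) {i : ZMod n} (hi : (v i).isLeft) :
    (v (nextRight v i)).isRight := by
  unfold nextRight
  split_ifs with h
  · exact h
  · exact isRight_add_two hn hv hadj hi (Sum.not_isRight.mp h)

variable [NeZero n]

theorem card_isRight_le (hv : Function.Injective v) : #{i | (v i).isRight} ≤ 4 :=
  card_le_card_of_injOn v (t := {u | u.isRight}) (fun i hi => by simpa using hi) hv.injOn

theorem card_isLeft_le (hn : 3 ≤ n) (hv : Function.Injective v)
    (hadj : ∀ i, G19.Adj (v i) (v (i + 1))) :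
    #{i | (v i).isLeft} ≤ 2 * #{i | (v i).isRight} := by
  refine card_le_mul_card_image_of_maps_to (f := nextRight v)
    (fun i hi => by simpa using isRight_nextRight hn hv hadj (by simpa using hi)) 2 fun k _ => ?_
  calc #{i ∈ {i | (v i).isLeft} | nextRight v i = k}
      ≤ #({k - 1, k - 2} : Finset (ZMod n)) := card_le_card fun i hi => by
        obtain ⟨-, rfl⟩ := mem_filter.mp hi
        simpa using eq_nextRight_sub i
    _ ≤ 2 := card_le_two

theorem le_twelve_of_cyclic_adj (hn : 3 ≤ n) (hv : Function.Injective v)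
    (hadj : ∀ i, G19.Adj (v i) (v (i + 1))) : n ≤ 12 := by
  have hsplit : #{i | (v i).isLeft} + #{i | (v i).isRight} = n := by
    simpa [Sum.not_isLeft] using card_filter_add_card_filter_not (s := univ) fun i => (v i).isLeft
  have := card_isLeft_le hn hv hadj
  have := card_isRight_le hv
  omega

theorem exists_forall_block_ne (hn : 3 ≤ n) (hv : Function.Injective v)
    (hadj : ∀ i, G19.Adj (v i) (v (i + 1))) : ∃ p : Fin 5, ∀ i, block (v i) ≠ .inl p := by
  by_contra! hall
  have hsub : univ.map .inl ⊆
      ({i | (v i).isRight} : Finset _).image fun k => block (v (k - 1)) := by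
    intro q hq
    obtain ⟨p, -, rfl⟩ := mem_map.mp hq
    obtain ⟨i, hi⟩ := hall p
    have hl : (v i).isLeft := by cases hvi : v i <;> simp_all [block]
    exact mem_image.mpr ⟨nextRight v i, by simpa using isRight_nextRight hn hv hadj hl,
      (block_nextRight_sub_one hadj hl).trans hi⟩
  have := (card_le_card hsub).trans card_image_le
  rw [card_map, card_univ, Fintype.card_fin] at this
  have := card_isRight_le hv
  omega

end CyclicSequence

variable {x : Fin 10 ⊕ Fin 4} {C : G19.Walk x x}

theorem length_le_of_isCycle (hC : C.IsCycle) : C.length ≤ 12 := by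
  have : NeZero C.length := ⟨by have := hC.three_le_length; omega⟩
  obtain ⟨v, hv, hadj, -⟩ := hC.exists_injective_zmod
  exact le_twelve_of_cyclic_adj hC.three_le_length hv hadj

theorem exists_adj_notMem_support_of_isCycle (hC : C.IsCycle) :
    ∃ a b, a ∉ C.support ∧ b ∉ C.support ∧ G19.Adj a b := by
  have : NeZero C.length := ⟨by have := hC.three_le_length; omega⟩
  obtain ⟨v, hv, hadj, hsupp⟩ := hC.exists_injective_zmod
  obtain ⟨p, hp⟩ := exists_forall_block_ne hC.three_le_length hv hadj
  have hoff : ∀ a : Fin 10, a.val / 2 = p.val → .inl a ∉ C.support := fun a ha hmem => by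
    obtain ⟨i, hi⟩ := hsupp _ hmem
    exact hp i (by simp [hi, block, ha])
  exact ⟨.inl ⟨2 * p, by omega⟩, .inl ⟨2 * p + 1, by omega⟩, hoff _ (by simp),
    hoff _ (by simp; omega), adj_inl_inl.mpr ⟨by simp [Fin.ext_iff], by simp; omega⟩⟩

end G19

/-- `5K₂ + K₄` is 4-connected with κ = 4 and δ = 5, has a cycle of
length exactly 4δ - 2κ = 12 but none of length ≥ 13, and has no dominating cycle. -/
theorem stmt19 :
    kappa G19 = 4 ∧ G19.minDegree = 5 ∧
    (∃ (x : Fin 10 ⊕ Fin 4) (C : G19.Walk x x), C.IsCycle ∧ C.length = 12) ∧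
    (∀ (x : Fin 10 ⊕ Fin 4) (C : G19.Walk x x), C.IsCycle → C.length < 13) ∧
    ¬ ∃ (x : Fin 10 ⊕ Fin 4) (C : G19.Walk x x), C.IsCycle ∧
        ∀ a b, a ∉ C.support → b ∉ C.support → ¬ G19.Adj a b := by
  refine ⟨G19.kappa_eq, G19.minDegree_eq, ⟨_, _, G19.cycle12_isCycle, G19.cycle12_length⟩,
    fun _ _ hC => Nat.lt_succ_of_le (G19.length_le_of_isCycle hC), ?_⟩
  rintro ⟨_, C, hC, hdom⟩
  obtain ⟨a, b, ha, hb, hab⟩ := G19.exists_adj_notMem_support_of_isCycle hC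
  exact hdom a b ha hb hab
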